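/- The hyperparameter combining rule [γ^{j+1}]_m = (1/d_m) Σ_{t=1}^T g_{tm} [γ̃_t^{j+1}]_m, together with the per-RB updates [γ_t^{j+1}]_i = (1/N) Σ_{n=1}^N ([Σ_t^{j+1}]_{i,i} + |[μ_{tn}^{j+1}]_i|²), is the unique maximizer of the EM surrogate Q(γ) = Σ_{t=1}^T E[log p(Z_t; γ_t) | Y_t; γ^j] over γ ∈ R_+^M, where the prior couples the hyperparameter γ_m across all RBs t with g_{tm} = 1. -/

import Mathlib

/-! Summed over the RBs that see user `m`, the surrogate is `-(d_m N) (log γ + γnew / γ)`, because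
`γnew` is the total posterior energy divided by `d_m N`; and `log γ + γnew / γ` is strictly
minimised at `γ = γnew` since `log u < u - 1` for `u ≠ 1`. -/

open Real Finset

theorem log_add_one_lt_log_add_div {b x : ℝ} (hb : 0 < b) (hx : 0 < x) (hne : x ≠ b) :
    log b + 1 < log x + b / x := by
  have hratio : b / x ≠ 1 := fun h => hne ((div_eq_one_iff_eq hx.ne').mp h).symm
  have h := log_lt_sub_one_of_pos (div_pos hb hx) hratio
  rw [log_div hb.ne' hx.ne'] at h
  linarith

theorem mul_log_add_div_lt_of_ne {c S x : ℝ} (hc : 0 < c) (hS : 0 < S / c) (hx : 0 < x)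
    (hne : x ≠ S / c) : c * log (S / c) + S / (S / c) < c * log x + S / x := by
  set b := S / c with hb
  have hSb : S = c * b := by rw [hb, mul_div_cancel₀ S hc.ne']
  have hlt := mul_lt_mul_of_pos_left (log_add_one_lt_log_add_div hS hx hne) hc
  calc c * log b + S / b = c * (log b + 1) := by rw [hSb, mul_div_assoc, div_self hS.ne']; ring
    _ < c * (log x + b / x) := hlt
    _ = c * log x + S / x := by rw [hSb]; ring

theorem sum_mul_log_add_div {ι : Type*} (s : Finset ι) (k x : ℝ) (a : ι → ℝ) :
    ∑ t ∈ s, (k * log x + a t / x) = (s.card * k) * log x + (∑ t ∈ s, a t) / x := by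
  rw [sum_add_distrib, sum_const, nsmul_eq_mul, sum_div, mul_assoc]

theorem sum_one_div_mul_div_card {ι : Type*} (s : Finset ι) (k : ℝ) (a : ι → ℝ) :
    (∑ t ∈ s, 1 / k * a t) / s.card = (∑ t ∈ s, a t) / (s.card * k) := by
  rw [← mul_sum]
  ring

theorem combining_rule_unique_em_maximizer_general (T N M : ℕ)
    (g : Fin T → Fin M → Bool) (m : Fin M)
    (Sdiag : Fin T → ℝ)
    (μv : Fin T → Fin N → ℂ)
    (γRB : Fin T → ℝ)
    (hγRB : ∀ t, γRB t = (1 / (N : ℝ)) * ∑ n : Fin N, (Sdiag t + ‖μv t n‖ ^ 2))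
    (γnew : ℝ)
    (hγnew : γnew = (∑ t ∈ Finset.univ.filter fun t : Fin T => g t m = true, γRB t)
        / ((Finset.univ.filter fun t : Fin T => g t m = true).card : ℝ))
    (hpos : 0 < γnew) :
    ∀ γ : ℝ, 0 < γ → γ ≠ γnew →
      (-(∑ t ∈ Finset.univ.filter fun t : Fin T => g t m = true,
          ((N : ℝ) * Real.log γ + (∑ n : Fin N, (Sdiag t + ‖μv t n‖ ^ 2)) / γ)))
      < (-(∑ t ∈ Finset.univ.filter fun t : Fin T => g t m = true,
          ((N : ℝ) * Real.log γnew + (∑ n : Fin N, (Sdiag t + ‖μv t n‖ ^ 2)) / γnew))) := by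
  intro γ hγ hne
  set F := univ.filter fun t : Fin T => g t m = true
  set energy : Fin T → ℝ := fun t => ∑ n : Fin N, (Sdiag t + ‖μv t n‖ ^ 2)
  have hγnew' : γnew = (∑ t ∈ F, energy t) / (F.card * N) := by
    rw [hγnew, sum_congr rfl fun t _ => hγRB t, sum_one_div_mul_div_card]
  -- `γnew ≠ 0` already rules out an empty `F` and `N = 0`, through the junk value `x / 0 = 0`.
  have hweight : (0 : ℝ) < F.card * N :=
    lt_of_le_of_ne (by positivity) (div_ne_zero_iff.mp (hγnew' ▸ hpos.ne')).2.symm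
  rw [neg_lt_neg_iff, sum_mul_log_add_div, sum_mul_log_add_div, hγnew']
  exact mul_log_add_div_lt_of_ne hweight (hγnew' ▸ hpos) hγ (hγnew' ▸ hne)

/-- **The IRSA hyperparameter combining rule is the unique M-step maximizer**: for each
user `m`, with per-RB posterior quantities `[Σ_t]_{m,m} ≥ 0` and posterior means
`[μ_{tn}]_m`, the EM surrogate term for user `m`,
`Q_m(γ) = -Σ_{t: g_{tm}=1} ( N log γ + (Σ_n ([Σ_t]_{m,m} + |[μ_{tn}]_m|²)) / γ )`,
is uniquely maximized over `γ > 0` at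
`γ_new = (1/d_m) Σ_{t: g_{tm}=1} (1/N) Σ_n ([Σ_t]_{m,m} + |[μ_{tn}]_m|²)`,
i.e. the combining rule `[γ^{j+1}]_m = (1/d_m) Σ_t g_{tm} [γ̃_t^{j+1}]_m` applied to the
per-RB updates `[γ_t^{j+1}]_m = (1/N) Σ_n ([Σ_t]_{m,m} + |[μ_{tn}]_m|²)`. -/
theorem combining_rule_unique_em_maximizer (T N M : ℕ) (hN : 0 < N)
    (g : Fin T → Fin M → Bool) (m : Fin M)
    (hd : 0 < (Finset.univ.filter fun t : Fin T => g t m = true).card)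
    (Sdiag : Fin T → ℝ) (hS : ∀ t, 0 ≤ Sdiag t)
    (μv : Fin T → Fin N → ℂ)
    (γRB : Fin T → ℝ)
    (hγRB : ∀ t, γRB t = (1 / (N : ℝ)) * ∑ n : Fin N, (Sdiag t + ‖μv t n‖ ^ 2))
    (γnew : ℝ)
    (hγnew : γnew = (∑ t ∈ Finset.univ.filter fun t : Fin T => g t m = true, γRB t)
        / ((Finset.univ.filter fun t : Fin T => g t m = true).card : ℝ))
    (hpos : 0 < γnew) :
    ∀ γ : ℝ, 0 < γ → γ ≠ γnew →
      (-(∑ t ∈ Finset.univ.filter fun t : Fin T => g t m = true,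
          ((N : ℝ) * Real.log γ + (∑ n : Fin N, (Sdiag t + ‖μv t n‖ ^ 2)) / γ)))
      < (-(∑ t ∈ Finset.univ.filter fun t : Fin T => g t m = true,
          ((N : ℝ) * Real.log γnew + (∑ n : Fin N, (Sdiag t + ‖μv t n‖ ^ 2)) / γnew))) :=
  combining_rule_unique_em_maximizer_general T N M g m Sdiag μv γRB hγRB γnew hγnew hpos
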